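/- Let Γ : Set X → Set X be a derivability operator. Any two safe-terminal natural inductions of Γ from the same structure S have the same limit. -/

import Mathlib

universe u

variable {X : Type u}

/-- A natural induction of derivability operator `Γ` from structure `B` of length `β`. -/
def IsNatInd (Γ : Set X → Set X) (B : Set X) (β : Ordinal.{u}) (f : Ordinal.{u} → Set X) : Prop :=
  f 0 = B ∧
  (∀ α : Ordinal.{u}, α + 1 ≤ β → f α ⊆ f (α + 1) ∧ f (α + 1) \ f α ⊆ Γ (f α)) ∧
  ∀ lam : Ordinal.{u}, lam ≤ β → Order.IsSuccLimit lam → f lam = ⋃ α < lam, f α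

/-- `S` is saturated (closed) under `Γ`. -/
def Saturated (Γ : Set X → Set X) (S : Set X) : Prop := Γ S ⊆ S

/-- `S` is saturated on the set `T` of atoms. -/
def SaturatedOn (Γ : Set X → Set X) (S T : Set X) : Prop := Γ S ∩ T ⊆ S

/-- The set of atoms safely derivable from `S`. -/
def SafeSet (Γ : Set X → Set X) (S : Set X) : Set X :=
  {A | A ∈ Γ S ∧ ∀ (β : Ordinal.{u}) (g : Ordinal.{u} → Set X), IsNatInd Γ S β g → A ∈ Γ (g β)}

/-- The set of atoms strictly underivable from `S`. -/
def UnderivSet (Γ : Set X → Set X) (S : Set X) : Set X :=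
  {A | ∀ (β : Ordinal.{u}) (g : Ordinal.{u} → Set X), IsNatInd Γ S β g → A ∉ Γ (g β)}

/-- The structure `T` is safely derivable from the structure `S`. -/
def SafeStep (Γ : Set X → Set X) (S T : Set X) : Prop := S ⊆ T ∧ T ⊆ S ∪ SafeSet Γ S

/-- A safe natural induction. -/
def IsSafeInd (Γ : Set X → Set X) (B : Set X) (β : Ordinal.{u}) (f : Ordinal.{u} → Set X) : Prop :=
  IsNatInd Γ B β f ∧ ∀ α : Ordinal.{u}, α + 1 ≤ β → SafeStep Γ (f α) (f (α + 1))

/-- A safe-terminal natural induction. -/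
def IsSafeTermInd (Γ : Set X → Set X) (B : Set X) (β : Ordinal.{u}) (f : Ordinal.{u} → Set X) : Prop :=
  IsSafeInd Γ B β f ∧ SafeSet Γ (f β) ⊆ f β

/-- `A ≺_∝ B` iff `A ∝ B` and not `B ∝ A`. -/
def Prec (r : X → X → Prop) (A B : X) : Prop := r A B ∧ ¬ r B A

/-- `r` is a dependency relation of `Γ`. -/
def IsDep (Γ : Set X → Set X) (r : X → X → Prop) : Prop :=
  ∀ (A : X) (S T : Set X), S ∩ {B | r B A} = T ∩ {B | r B A} → (A ∈ Γ S ↔ A ∈ Γ T)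

/-- `r` is a monotone dependency relation of `Γ`. -/
def IsMonDep (Γ : Set X → Set X) (r : X → X → Prop) : Prop :=
  ∀ (A : X) (S T : Set X), S ∩ {B | Prec r B A} = T ∩ {B | Prec r B A} →
    S ∩ {B | r B A} ⊆ T ∩ {B | r B A} → A ∈ Γ S → A ∈ Γ T

/-- `r` monotonically orders `Γ`. -/
def MonOrders (Γ : Set X → Set X) (r : X → X → Prop) : Prop :=
  Transitive r ∧ WellFounded (Prec r) ∧ IsMonDep Γ r

/-- `r` strictly orders `Γ`. -/
def StrictOrders (Γ : Set X → Set X) (r : X → X → Prop) : Prop :=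
  Transitive r ∧ Irreflexive r ∧ WellFounded r ∧ IsDep Γ r

/-- The natural induction `f` respects the relation `s`: an atom `A` may be derived at stage `α`
only if `f α` is saturated on `{B | s B A}`. -/
def Respects (Γ : Set X → Set X) (β : Ordinal.{u}) (f : Ordinal.{u} → Set X)
    (s : X → X → Prop) : Prop :=
  ∀ α : Ordinal.{u}, α + 1 ≤ β → ∀ A ∈ f (α + 1) \ f α, SaturatedOn Γ (f α) {B | s B A}

/-- A commutative-enough replacement for the natural sum used as termination measure. -/
noncomputable def nsum (a b : Ordinal.{u}) : Ordinal.{u} := Ordinal.omega0 * max a b + (if b ≤ a then 1 else 0)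

infixl:65 " ♯ " => nsum

theorem nsum_lt {α δ δ' : Ordinal.{u}} (h : δ' < δ) : δ' ♯ α < α ♯ δ := by
  unfold nsum
  by_cases hd : δ ≤ α
  · have h1 : max δ' α = α := max_eq_right (h.le.trans hd)
    have h2 : ¬ α ≤ δ' := fun h' => absurd (h'.trans_lt h) (not_lt.mpr hd)
    rw [h1, if_neg h2, if_pos hd, add_zero, max_eq_left hd]
    exact lt_add_of_pos_right _ (zero_lt_one' Ordinal.{u})
  · have hm : max δ' α < δ := max_lt h (lt_of_not_ge hd)
    rw [if_neg hd, add_zero, max_eq_right (not_le.mp hd).le]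
    calc Ordinal.omega0 * max δ' α + (if α ≤ δ' then 1 else 0)
        ≤ Ordinal.omega0 * max δ' α + 1 := by
          gcongr; split_ifs <;> simp
      _ < Ordinal.omega0 * max δ' α + Ordinal.omega0 := by
          gcongr; exact Ordinal.one_lt_omega0
      _ = Ordinal.omega0 * Order.succ (max δ' α) := (Ordinal.mul_succ _ _).symm
      _ ≤ Ordinal.omega0 * δ := by gcongr; exact Order.succ_le_of_lt hm

section Aux

variable {Γ : Set X → Set X}

theorem natInd_mono {B : Set X} {β : Ordinal.{u}} {f : Ordinal.{u} → Set X}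
    (hf : IsNatInd Γ B β f) :
    ∀ α₂ : Ordinal.{u}, α₂ ≤ β → ∀ α₁ ≤ α₂, f α₁ ⊆ f α₂ := by
  intro α₂
  induction α₂ using Ordinal.induction with
  | h α₂ IH =>
    intro hβ α₁ h1
    rcases Ordinal.zero_or_succ_or_isSuccLimit α₂ with h0 | ⟨a, ha⟩ | hl
    · subst h0; rw [nonpos_iff_eq_zero.mp h1]
    · subst ha
      rw [← Ordinal.add_one_eq_succ] at hβ h1 ⊢
      rcases eq_or_lt_of_le h1 with rfl | h1
      · rfl
      · have ha1 : a < a + 1 := by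
          rw [Ordinal.add_one_eq_succ]; exact Order.lt_succ a
        have h1' : α₁ ≤ a := by
          rw [Ordinal.add_one_eq_succ, Order.lt_succ_iff] at h1; exact h1
        exact (IH a ha1 (le_trans ha1.le hβ) α₁ h1').trans (hf.2.1 a hβ).1
    · rcases eq_or_lt_of_le h1 with rfl | h1
      · rfl
      · rw [hf.2.2 α₂ hβ hl]
        intro A hA
        exact Set.mem_iUnion₂.mpr ⟨α₁, h1, hA⟩

/-- `T` is the limit of some natural induction of `Γ` from `S`. -/
def Reach (Γ : Set X → Set X) (S T : Set X) : Prop :=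
  ∃ (β : Ordinal.{u}) (f : Ordinal.{u} → Set X), IsNatInd Γ S β f ∧ f β = T

theorem gamma_of_reach {S T : Set X} {A : X} (hA : A ∈ SafeSet Γ S)
    (h : Reach Γ S T) : A ∈ Γ T := by
  obtain ⟨β, f, hind, rfl⟩ := h
  exact hA.2 β f hind

theorem reach_trans {S T U : Set X} (h1 : Reach Γ S T) (h2 : Reach Γ T U) :
    Reach Γ S U := by
  obtain ⟨β, f, hf, rfl⟩ := h1
  obtain ⟨γ, g, hg, rfl⟩ := h2
  set h : Ordinal.{u} → Set X := fun δ => if δ < β then f δ else g (δ - β) with hdef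
  have hle : ∀ δ ≤ β, h δ = f δ := by
    intro δ hδ
    by_cases hlt : δ < β
    · simp [hdef, hlt]
    · have : δ = β := le_antisymm hδ (not_lt.mp hlt)
      subst this
      simp only [hdef, lt_irrefl, if_false, Ordinal.sub_self]
      exact hg.1
  have hge : ∀ δ, β ≤ δ → h δ = g (δ - β) := by
    intro δ hδ
    by_cases hlt : δ < β
    · exact absurd hδ (not_le.mpr hlt)
    · simp [hdef, hlt]
  refine ⟨β + γ, h, ⟨?_, ?_, ?_⟩, ?_⟩
  · rw [hle 0 (zero_le (a := β))]; exact hf.1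
  · intro δ hδ1
    rcases le_or_gt (δ + 1) β with hc | hc
    · have hδβ : δ ≤ β := le_trans (le_self_add) hc
      rw [hle δ hδβ, hle (δ + 1) hc]
      exact hf.2.1 δ hc
    · have hβδ : β ≤ δ := by
        rw [Ordinal.add_one_eq_succ, Order.lt_succ_iff] at hc; exact hc
      have e1 : h δ = g (δ - β) := hge δ hβδ
      have e2 : δ + 1 - β = (δ - β) + 1 := by
        have h3 : β + (δ - β) = δ := Ordinal.add_sub_cancel_of_le hβδ
        calc δ + 1 - β = β + ((δ - β) + 1) - β := by rw [← add_assoc, h3]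
          _ = (δ - β) + 1 := Ordinal.add_sub_cancel _ _
      have e3 : h (δ + 1) = g ((δ - β) + 1) := by
        rw [hge (δ + 1) (hβδ.trans (le_self_add)), e2]
      have hle2 : (δ - β) + 1 ≤ γ := by
        have hh : β + ((δ - β) + 1) ≤ β + γ := by
          rw [← add_assoc, Ordinal.add_sub_cancel_of_le hβδ]; exact hδ1
        exact (add_le_add_iff_left β).mp hh
      rw [e1, e3]
      exact hg.2.1 _ hle2
  · intro lam hlam hl
    rcases le_or_gt lam β with hc | hc
    · rw [hle lam hc, hf.2.2 lam hc hl]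
      exact Set.iUnion₂_congr fun α hα => (hle α (le_of_lt (lt_of_lt_of_le hα hc))).symm
    · have hll : Order.IsSuccLimit (lam - β) := Ordinal.isSuccLimit_sub hl.isSuccPrelimit hc
      have hsub : lam - β ≤ γ := Ordinal.sub_le.mpr hlam
      rw [hge lam hc.le, hg.2.2 _ hsub hll]
      ext A
      simp only [Set.mem_iUnion]
      constructor
      · rintro ⟨ν, hν, hA⟩
        refine ⟨β + ν, ?_, ?_⟩
        · have hh : β + ν < β + (lam - β) := (add_lt_add_iff_left β).mpr hν
          rwa [Ordinal.add_sub_cancel_of_le hc.le] at hh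
        · rw [hge (β + ν) (le_self_add), Ordinal.add_sub_cancel]
          exact hA
      · rintro ⟨μ, hμ, hA⟩
        rcases le_or_gt μ β with hc2 | hc2
        · rw [hle μ hc2] at hA
          refine ⟨0, hll.pos, ?_⟩
          rw [hg.1]
          exact natInd_mono hf β le_rfl μ hc2 hA
        · rw [hge μ hc2.le] at hA
          refine ⟨μ - β, ?_, hA⟩
          have hh : β + (μ - β) < β + (lam - β) := by
            rw [Ordinal.add_sub_cancel_of_le hc2.le, Ordinal.add_sub_cancel_of_le hc.le]
            exact hμ
          exact (add_lt_add_iff_left β).mp hh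
  · rw [hge (β + γ) (le_self_add), Ordinal.add_sub_cancel]

theorem safeSet_mono_reach {S T : Set X} (h : Reach Γ S T) :
    SafeSet Γ S ⊆ SafeSet Γ T := by
  intro A hA
  refine ⟨gamma_of_reach hA h, fun β' g' hind => ?_⟩
  exact gamma_of_reach hA (reach_trans h ⟨β', g', hind, rfl⟩)

theorem key (Γ : Set X → Set X) (S : Set X) :
    ∀ o : Ordinal.{u}, ∀ (β γ : Ordinal.{u}) (f g : Ordinal.{u} → Set X),
      IsSafeInd Γ S β f → IsSafeInd Γ S γ g →
      ∀ α δ : Ordinal.{u}, α ≤ β → δ ≤ γ → α ♯ δ ≤ o →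
      Reach Γ (f α) (f α ∪ g δ) := by
  intro o
  induction o using Ordinal.induction with
  | h o IH =>
    intro β γ f g hf hg α δ hαβ hδγ ho
    refine ⟨δ, fun δ' => f α ∪ g δ', ⟨?_, fun δ' hδ' => ⟨?_, ?_⟩, fun lam hlam hl => ?_⟩, rfl⟩
    · show f α ∪ g 0 = f α
      rw [hg.1.1, ← hf.1.1]
      exact Set.union_eq_left.mpr (natInd_mono hf.1 α hαβ 0 (zero_le (a := α)))
    · exact Set.union_subset_union_right _ (hg.1.2.1 δ' (hδ'.trans hδγ)).1
    · intro A hA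
      have hAnf : A ∉ f α := fun h => hA.2 (Or.inl h)
      have hAn : A ∉ g δ' := fun h => hA.2 (Or.inr h)
      have hAg : A ∈ g (δ' + 1) := by
        rcases hA.1 with h | h
        · exact absurd h hAnf
        · exact h
      have hsafe : A ∈ SafeSet Γ (g δ') := by
        rcases (hg.2 δ' (hδ'.trans hδγ)).2 hAg with h | h
        · exact absurd h hAn
        · exact h
      have hδ'lt : δ' < δ := by
        rw [Ordinal.add_one_eq_succ] at hδ'
        exact lt_of_lt_of_le (Order.lt_succ δ') hδ'
      have hreach : Reach Γ (g δ') (g δ' ∪ f α) := by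
        refine IH (δ' ♯ α) ?_ γ β g f hg hf δ' α (hδ'lt.le.trans hδγ) hαβ le_rfl
        exact lt_of_lt_of_le (nsum_lt hδ'lt) ho
      have hmem := gamma_of_reach hsafe hreach
      rwa [Set.union_comm] at hmem
    · show f α ∪ g lam = ⋃ δ' < lam, (f α ∪ g δ')
      rw [hg.1.2.2 lam (hlam.trans hδγ) hl]
      ext A
      simp only [Set.mem_union, Set.mem_iUnion]
      constructor
      · rintro (h | ⟨ν, hν, h⟩)
        · exact ⟨0, hl.pos, Or.inl h⟩
        · exact ⟨ν, hν, Or.inr h⟩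
      · rintro ⟨ν, hν, h | h⟩
        · exact Or.inl h
        · exact Or.inr ⟨ν, hν, h⟩

theorem subset_limit {S : Set X} {β γ : Ordinal.{u}} {f g : Ordinal.{u} → Set X}
    (hf : IsSafeInd Γ S β f) (hg : IsSafeTermInd Γ S γ g) :
    ∀ α ≤ β, f α ⊆ g γ := by
  intro α
  induction α using Ordinal.induction with
  | h α IH =>
    intro hαβ
    rcases Ordinal.zero_or_succ_or_isSuccLimit α with rfl | ⟨a, rfl⟩ | hl
    · rw [hf.1.1, ← hg.1.1.1]
      exact natInd_mono hg.1.1 γ le_rfl 0 (zero_le (a := γ))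
    · rw [← Ordinal.add_one_eq_succ] at hαβ ⊢
      have ha : a < a + 1 := by
        rw [Ordinal.add_one_eq_succ]; exact Order.lt_succ a
      have haβ : a ≤ β := ha.le.trans hαβ
      have hsub : f a ⊆ g γ := IH a ha haβ
      intro A hA
      by_cases hAa : A ∈ f a
      · exact hsub hAa
      · have hsafe : A ∈ SafeSet Γ (f a) := by
          rcases (hf.2 a hαβ).2 hA with h | h
          · exact absurd h hAa
          · exact h
        have hreach : Reach Γ (f a) (f a ∪ g γ) :=
          key Γ S (a ♯ γ) β γ f g hf hg.1 a γ haβ le_rfl le_rfl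
        rw [Set.union_eq_right.mpr hsub] at hreach
        exact hg.2 (safeSet_mono_reach hreach hsafe)
    · rw [hf.1.2.2 α hαβ hl]
      intro A hA
      rcases Set.mem_iUnion₂.mp hA with ⟨ν, hν, h⟩
      exact IH ν hν (hν.le.trans hαβ) h

end Aux

/-- any two safe-terminal natural inductions from the same structure have the
same limit. -/
theorem stmt11 (Γ : Set X → Set X) (S : Set X) (β γ : Ordinal.{u})
    (f g : Ordinal.{u} → Set X)
    (hf : IsSafeTermInd Γ S β f) (hg : IsSafeTermInd Γ S γ g) : f β = g γ :=
  Set.Subset.antisymm (subset_limit hf.1 hg β le_rfl) (subset_limit hg.1 hf γ le_rfl)
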